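/- arXiv:1005.4203 — 5 statements merged into one kernel-verified Lean document; each statement's English description precedes it below -/
import Mathlib

section
/- Let G be a group containing elements x, y, y' such that xyx = yxy, xy'x = y'xy', x(y⁻¹y'y)x = (y⁻¹y'y)x(y⁻¹y'y), x commutes with y'y, and x² = y² = y'² = e. Then y = y'. -/
theorem stmt_0 {G : Type*} [Group G] (x y y' : G)
    (h1 : x * y * x = y * x * y)
    (h2 : x * y' * x = y' * x * y')
    (h3 : x * (y⁻¹ * y' * y) * x = (y⁻¹ * y' * y) * x * (y⁻¹ * y' * y))
    (h4 : x * (y' * y) = (y' * y) * x)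
    (hx : x ^ 2 = 1) (hy : y ^ 2 = 1) (hy' : y' ^ 2 = 1) :
    y = y' := by
  have hxx : x * x = 1 := by rw [← pow_two]; exact hx
  have hyy : y * y = 1 := by rw [← pow_two]; exact hy
  have hy'y' : y' * y' = 1 := by rw [← pow_two]; exact hy'
  have cx : ∀ a : G, x * (x * a) = a := fun a => by rw [← mul_assoc, hxx, one_mul]
  have cy' : ∀ a : G, y' * (y' * a) = a := fun a => by rw [← mul_assoc, hy'y', one_mul]
  have E1 : x * (y' * y) * x = y' * y := by rw [h4, mul_assoc, hxx, mul_one]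
  have E2 : x * (y' * y) * x = y' * x * y' * (y * x * y) := by
    rw [← h1, ← h2]; simp [mul_assoc, cx]
  have E3 : y' * y = y' * x * y' * (y * x * y) := by rw [← E1, E2]
  have E5 : y' * y = 1 := by
    calc y' * y = y' * x * y' * (y * x * y) := E3
      _ = y' * (x * (y' * y) * x) * y := by simp [mul_assoc]
      _ = y' * (y' * y) * y := by rw [E1]
      _ = 1 := by rw [mul_assoc, mul_assoc, cy', hyy]
  calc y = y' * (y' * y) := (cy' y).symm
    _ = y' * 1 := by rw [E5]
    _ = y' := mul_one y'
end

section
/- Let G be a group with elements x, y, y' satisfying the braid relations xyx = yxy and xy'x = y'xy', and suppose x² = y² = y'² = e and [x, y'y] = e. Then y'y has order dividing 2 (i.e., (y'y)² = e). -/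
theorem stmt_1 {G : Type*} [Group G] (x y y' : G)
    (h1 : x * y * x = y * x * y)
    (h2 : x * y' * x = y' * x * y')
    (hx : x ^ 2 = 1) (hy : y ^ 2 = 1) (hy' : y' ^ 2 = 1)
    (hc : x * (y' * y) * x⁻¹ * (y' * y)⁻¹ = 1) :
    (y' * y) ^ 2 = 1 := by
  rw [pow_two] at hx hy hy'
  have hxi : x⁻¹ = x := inv_eq_of_mul_eq_one_right hx
  have key : x * (y' * y) * x = y' * y := by
    have := mul_eq_one_iff_eq_inv.mp hc
    rw [hxi, inv_inv] at this
    exact this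
  have e1 : y' * y = y' * x * y' * (y * x * y) := by
    calc y' * y = x * (y' * y) * x := key.symm
    _ = (x * y' * x) * (x * y * x) := by
        simp only [mul_assoc]
        rw [← mul_assoc x x, hx, one_mul]
    _ = y' * x * y' * (y * x * y) := by rw [h1, h2]
  simp only [mul_assoc] at e1
  have e2 : y = x * (y' * (y * (x * y))) := mul_left_cancel e1
  have e3 : (x * (y' * y) * x) * y = 1 * y := by
    simp only [mul_assoc, one_mul]
    exact e2.symm
  have e4 : y' * y = 1 := key.symm.trans (mul_right_cancel e3)
  rw [e4, one_pow]
end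

section
/- Let G = ⟨Γ₁, Γ₂, Γ₃ | Γ₁Γ₂Γ₁ = Γ₂Γ₁Γ₂, Γ₂Γ₃Γ₂ = Γ₃Γ₂Γ₃, Γ₁Γ₃ = Γ₃Γ₁, Γ₁⁻²Γ₂Γ₁² = Γ₃⁻²Γ₂Γ₃²⟩. Then the quotient of G by the normal closure of {Γ₁², Γ₂², Γ₃²} is isomorphic to S₄. -/
def stmt7Rels : Set (FreeGroup (Fin 3)) :=
  { FreeGroup.of 0 * FreeGroup.of 1 * FreeGroup.of 0 *
      (FreeGroup.of 1 * FreeGroup.of 0 * FreeGroup.of 1)⁻¹,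
    FreeGroup.of 1 * FreeGroup.of 2 * FreeGroup.of 1 *
      (FreeGroup.of 2 * FreeGroup.of 1 * FreeGroup.of 2)⁻¹,
    FreeGroup.of 0 * FreeGroup.of 2 * (FreeGroup.of 2 * FreeGroup.of 0)⁻¹,
    (FreeGroup.of 0)⁻¹ ^ 2 * FreeGroup.of 1 * (FreeGroup.of 0) ^ 2 *
      ((FreeGroup.of 2)⁻¹ ^ 2 * FreeGroup.of 1 * (FreeGroup.of 2) ^ 2)⁻¹ }

namespace Stmt7Aux

/-- The set of squares of the generators, inside the presented group. -/
def sqSet : Set (PresentedGroup stmt7Rels) :=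
  {(PresentedGroup.of (rels := stmt7Rels) 0) ^ 2,
   (PresentedGroup.of (rels := stmt7Rels) 1) ^ 2,
   (PresentedGroup.of (rels := stmt7Rels) 2) ^ 2}

abbrev Q := PresentedGroup stmt7Rels ⧸ Subgroup.normalClosure sqSet

/-- The projection to the quotient. -/
def pr : PresentedGroup stmt7Rels →* Q := QuotientGroup.mk' _

/-- Images of the three generators in `Q`. -/
def g (n : ℕ) : Q :=
  match n with
  | 0 => pr (PresentedGroup.of 0)
  | 1 => pr (PresentedGroup.of 1)
  | _ => pr (PresentedGroup.of 2)

lemma rel_of_mem {r : FreeGroup (Fin 3)} (h : r ∈ stmt7Rels) :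
    pr (PresentedGroup.mk stmt7Rels r) = 1 := by
  have h1 : PresentedGroup.mk stmt7Rels r = 1 :=
    (QuotientGroup.eq_one_iff r).2 (Subgroup.subset_normalClosure h)
  rw [h1, map_one]

lemma gsq (n : ℕ) : g n * g n = 1 := by
  have key : ∀ i : Fin 3,
      (PresentedGroup.of (rels := stmt7Rels) i) ^ 2 ∈ Subgroup.normalClosure sqSet := by
    intro i
    apply Subgroup.subset_normalClosure
    fin_cases i
    · exact Or.inl rfl
    · exact Or.inr (Or.inl rfl)
    · exact Or.inr (Or.inr rfl)
  have key2 : ∀ i : Fin 3,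
      pr (PresentedGroup.of (rels := stmt7Rels) i) * pr (PresentedGroup.of i) = 1 := by
    intro i
    have h1 : pr ((PresentedGroup.of (rels := stmt7Rels) i) ^ 2) = 1 :=
      (QuotientGroup.eq_one_iff _).2 (key i)
    simpa [pow_two] using h1
  match n with
  | 0 => exact key2 0
  | 1 => exact key2 1
  | (m+2) => exact key2 2

lemma gsq' (n : ℕ) (x : Q) : g n * (g n * x) = x := by
  rw [← mul_assoc, gsq, one_mul]

lemma braid1 : g 1 * g 0 * g 1 = g 0 * g 1 * g 0 := by
  have h := rel_of_mem (Or.inl rfl)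
  simp only [map_mul, map_inv] at h
  have h' : pr (PresentedGroup.mk stmt7Rels (FreeGroup.of 0)) *
      pr (PresentedGroup.mk stmt7Rels (FreeGroup.of 1)) *
      pr (PresentedGroup.mk stmt7Rels (FreeGroup.of 0)) =
      pr (PresentedGroup.mk stmt7Rels (FreeGroup.of 1)) *
      pr (PresentedGroup.mk stmt7Rels (FreeGroup.of 0)) *
      pr (PresentedGroup.mk stmt7Rels (FreeGroup.of 1)) := by
    rw [← mul_inv_eq_one]
    simpa [mul_assoc] using h
  exact h'.symm

lemma braid2 : g 2 * g 1 * g 2 = g 1 * g 2 * g 1 := by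
  have h := rel_of_mem (Or.inr (Or.inl rfl))
  simp only [map_mul, map_inv] at h
  have h' : pr (PresentedGroup.mk stmt7Rels (FreeGroup.of 1)) *
      pr (PresentedGroup.mk stmt7Rels (FreeGroup.of 2)) *
      pr (PresentedGroup.mk stmt7Rels (FreeGroup.of 1)) =
      pr (PresentedGroup.mk stmt7Rels (FreeGroup.of 2)) *
      pr (PresentedGroup.mk stmt7Rels (FreeGroup.of 1)) *
      pr (PresentedGroup.mk stmt7Rels (FreeGroup.of 2)) := by
    rw [← mul_inv_eq_one]
    simpa [mul_assoc] using h
  exact h'.symm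

lemma comm02 : g 2 * g 0 = g 0 * g 2 := by
  have h := rel_of_mem (Or.inr (Or.inr (Or.inl rfl)))
  simp only [map_mul, map_inv] at h
  have h' : pr (PresentedGroup.mk stmt7Rels (FreeGroup.of 0)) *
      pr (PresentedGroup.mk stmt7Rels (FreeGroup.of 2)) =
      pr (PresentedGroup.mk stmt7Rels (FreeGroup.of 2)) *
      pr (PresentedGroup.mk stmt7Rels (FreeGroup.of 0)) := by
    rw [← mul_inv_eq_one]
    simpa [mul_assoc] using h
  exact h'.symm

lemma braid1' (x : Q) : g 1 * (g 0 * (g 1 * x)) = g 0 * (g 1 * (g 0 * x)) := by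
  rw [← mul_assoc, ← mul_assoc, braid1, mul_assoc, mul_assoc]

lemma braid2' (x : Q) : g 2 * (g 1 * (g 2 * x)) = g 1 * (g 2 * (g 1 * x)) := by
  rw [← mul_assoc, ← mul_assoc, braid2, mul_assoc, mul_assoc]

lemma comm02' (x : Q) : g 2 * (g 0 * x) = g 0 * (g 2 * x) := by
  rw [← mul_assoc, comm02, mul_assoc]

lemma rule4' (x : Q) :
    g 2 * (g 1 * (g 0 * (g 2 * x))) = g 1 * (g 2 * (g 1 * (g 0 * x))) := by
  rw [← comm02' x]
  exact braid2' _

/-- One pass of the rewriting system for the Coxeter presentation of `S₄`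
(fuel-based so that it reduces in the kernel). -/
def stepF : ℕ → List ℕ → List ℕ
  | 0, w => w
  | _ + 1, [] => []
  | fl + 1, 2 :: 1 :: 0 :: 2 :: t => 1 :: 2 :: stepF fl (1 :: 0 :: t)
  | fl + 1, 2 :: 1 :: 2 :: t => 1 :: 2 :: stepF fl (1 :: t)
  | fl + 1, 1 :: 0 :: 1 :: t => 0 :: 1 :: stepF fl (0 :: t)
  | fl + 1, 2 :: 0 :: t => 0 :: stepF fl (2 :: t)
  | fl + 1, 0 :: 0 :: t => stepF fl t
  | fl + 1, 1 :: 1 :: t => stepF fl t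
  | fl + 1, 2 :: 2 :: t => stepF fl t
  | fl + 1, a :: t => a :: stepF fl t

def step (w : List ℕ) : List ℕ := stepF 16 w

def nf (w : List ℕ) : List ℕ := step (step (step (step w)))

/-- Evaluation of a word in `Q`. -/
def evalWord : List ℕ → Q
  | [] => 1
  | n :: t => g n * evalWord t

lemma evalWord_stepF (fl : ℕ) (w : List ℕ) : evalWord (stepF fl w) = evalWord w := by
  induction fl, w using stepF.induct <;>
    simp_all [stepF, evalWord, gsq', comm02', braid1', braid2', rule4']

lemma evalWord_step (w : List ℕ) : evalWord (step w) = evalWord w :=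
  evalWord_stepF 16 w

lemma evalWord_nf (w : List ℕ) : evalWord (nf w) = evalWord w := by
  simp [nf, evalWord_step]

lemma evalWord_append (u v : List ℕ) :
    evalWord (u ++ v) = evalWord u * evalWord v := by
  induction u with
  | nil => simp [evalWord]
  | cons a t ih => simp [evalWord, ih, mul_assoc]

/-- The three adjacent transpositions in `S₄`. -/
def s (n : ℕ) : Equiv.Perm (Fin 4) :=
  match n with
  | 0 => Equiv.swap 0 1
  | 1 => Equiv.swap 1 2
  | _ => Equiv.swap 2 3

def evalPerm : List ℕ → Equiv.Perm (Fin 4)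
  | [] => 1
  | n :: t => s n * evalPerm t

lemma evalPerm_append (u v : List ℕ) :
    evalPerm (u ++ v) = evalPerm u * evalPerm v := by
  induction u with
  | nil => simp [evalPerm]
  | cons a t ih => simp [evalPerm, ih, mul_assoc]

/-- Normal-form word for each permutation. -/
def word (sigma : Equiv.Perm (Fin 4)) : List ℕ :=
  match (sigma 0).val, (sigma 1).val, (sigma 2).val with
  | 0, 1, 2 => []
  | 0, 1, 3 => [2]
  | 0, 2, 1 => [1]
  | 0, 2, 3 => [1, 2]
  | 0, 3, 1 => [2, 1]
  | 0, 3, 2 => [1, 2, 1]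
  | 1, 0, 2 => [0]
  | 1, 0, 3 => [0, 2]
  | 1, 2, 0 => [0, 1]
  | 1, 2, 3 => [0, 1, 2]
  | 1, 3, 0 => [0, 2, 1]
  | 1, 3, 2 => [0, 1, 2, 1]
  | 2, 0, 1 => [1, 0]
  | 2, 0, 3 => [1, 0, 2]
  | 2, 1, 0 => [0, 1, 0]
  | 2, 1, 3 => [0, 1, 0, 2]
  | 2, 3, 0 => [1, 0, 2, 1]
  | 2, 3, 1 => [0, 1, 0, 2, 1]
  | 3, 0, 1 => [2, 1, 0]
  | 3, 0, 2 => [1, 2, 1, 0]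
  | 3, 1, 0 => [0, 2, 1, 0]
  | 3, 1, 2 => [0, 1, 2, 1, 0]
  | 3, 2, 0 => [1, 0, 2, 1, 0]
  | _, _, _ => [0, 1, 0, 2, 1, 0]

/-- Table of the 24 normal-form words. -/
def table (k : ℕ) : List ℕ :=
  match k with
  | 0 => []
  | 1 => [0]
  | 2 => [1]
  | 3 => [2]
  | 4 => [0, 1]
  | 5 => [0, 2]
  | 6 => [1, 0]
  | 7 => [1, 2]
  | 8 => [2, 1]
  | 9 => [0, 1, 0]
  | 10 => [0, 1, 2]
  | 11 => [0, 2, 1]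
  | 12 => [1, 0, 2]
  | 13 => [1, 2, 1]
  | 14 => [2, 1, 0]
  | 15 => [0, 1, 0, 2]
  | 16 => [0, 1, 2, 1]
  | 17 => [0, 2, 1, 0]
  | 18 => [1, 0, 2, 1]
  | 19 => [1, 2, 1, 0]
  | 20 => [0, 1, 0, 2, 1]
  | 21 => [0, 1, 2, 1, 0]
  | 22 => [1, 0, 2, 1, 0]
  | 23 => [0, 1, 0, 2, 1, 0]
  | _ => [0, 1, 0, 2, 1, 0]

/-- A concrete enumeration of `S₄`. -/
def f (k : Fin 24) : Equiv.Perm (Fin 4) := evalPerm (table k.val)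

lemma f_inj : Function.Injective f := by decide

lemma f_surj : Function.Surjective f := by
  have hbij : Function.Bijective f := by
    rw [Fintype.bijective_iff_injective_and_card]
    constructor
    · exact f_inj
    · rw [Fintype.card_fin, Fintype.card_perm, Fintype.card_fin]
      decide
  exact hbij.2

lemma word_eval (sigma : Equiv.Perm (Fin 4)) : evalPerm (word sigma) = sigma := by
  obtain ⟨k, rfl⟩ := f_surj sigma
  revert k
  decide

lemma key_nf (sigma : Equiv.Perm (Fin 4)) (i : Fin 3) :
    nf (word (s i.val * sigma)) = nf (i.val :: word sigma) := by
  obtain ⟨k, rfl⟩ := f_surj sigma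
  revert i
  revert k
  decide

lemma word_one : word 1 = [] := by decide

lemma word_s0 : word (s 0) = [0] := by decide
lemma word_s1 : word (s 1) = [1] := by decide
lemma word_s2 : word (s 2) = [2] := by decide

/-- The normal-form section `S₄ → Q`. -/
def N (sigma : Equiv.Perm (Fin 4)) : Q := evalWord (word sigma)

lemma N_left (sigma : Equiv.Perm (Fin 4)) (i : Fin 3) :
    N (s i.val * sigma) = g i.val * N sigma := by
  have h1 : evalWord (word (s i.val * sigma)) = evalWord (i.val :: word sigma) := by
    rw [← evalWord_nf (word (s i.val * sigma)), key_nf, evalWord_nf]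
  rw [N, h1]; rfl

lemma evalWord_eq_N (w : List ℕ) : evalWord w = N (evalPerm w) := by
  induction w with
  | nil => simp [evalWord, evalPerm, N, word_one]
  | cons n t ih =>
    rcases n with _ | _ | _ | m
    · show g 0 * evalWord t = N (s (0 : Fin 3).val * evalPerm t)
      rw [N_left, ih]; rfl
    · show g 1 * evalWord t = N (s (1 : Fin 3).val * evalPerm t)
      rw [N_left, ih]; rfl
    · show g 2 * evalWord t = N (s (2 : Fin 3).val * evalPerm t)
      rw [N_left, ih]; rfl
    · show g (m + 3) * evalWord t = N (s (m + 3) * evalPerm t)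
      have hg : g (m + 3) = g 2 := rfl
      have hs : s (m + 3) = s 2 := rfl
      rw [hg, hs, ih]
      exact (N_left (evalPerm t) 2).symm

lemma N_mul (sigma tau : Equiv.Perm (Fin 4)) : N (sigma * tau) = N sigma * N tau := by
  have h1 : evalPerm (word sigma ++ word tau) = sigma * tau := by
    rw [evalPerm_append, word_eval, word_eval]
  calc N (sigma * tau) = N (evalPerm (word sigma ++ word tau)) := by rw [h1]
    _ = evalWord (word sigma ++ word tau) := (evalWord_eq_N _).symm
    _ = evalWord (word sigma) * evalWord (word tau) := evalWord_append _ _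
    _ = N sigma * N tau := rfl

/-- `N` as a monoid hom. -/
def NHom : Equiv.Perm (Fin 4) →* Q where
  toFun := N
  map_one' := by rw [N, word_one]; rfl
  map_mul' := N_mul

lemma srel : ∀ r ∈ stmt7Rels, FreeGroup.lift (fun i : Fin 3 => s i.val) r = 1 := by
  intro r hr
  rcases hr with rfl | rfl | rfl | rfl <;>
    · simp only [map_mul, map_inv, map_pow, FreeGroup.lift_apply_of]
      decide

/-- The homomorphism from the presented group to `S₄`. -/
def phi0 : PresentedGroup stmt7Rels →* Equiv.Perm (Fin 4) := PresentedGroup.toGroup srel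

lemma phi0_sq : ∀ x ∈ Subgroup.normalClosure sqSet, phi0 x = 1 := by
  intro x hx
  have hle : sqSet ⊆ ↑(MonoidHom.ker phi0) := by
    intro y hy
    rcases hy with rfl | rfl | rfl <;>
      · rw [SetLike.mem_coe, MonoidHom.mem_ker, map_pow, phi0, PresentedGroup.toGroup.of]
        decide
  exact MonoidHom.mem_ker.1 (Subgroup.normalClosure_le_normal hle hx)

def phi : Q →* Equiv.Perm (Fin 4) :=
  QuotientGroup.lift _ phi0 phi0_sq

lemma phi_g0 : phi (g 0) = s 0 := by
  show phi0 (PresentedGroup.of 0) = s 0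
  rw [phi0, PresentedGroup.toGroup.of]
  rfl

lemma phi_g1 : phi (g 1) = s 1 := by
  show phi0 (PresentedGroup.of 1) = s 1
  rw [phi0, PresentedGroup.toGroup.of]
  rfl

lemma phi_g2 : phi (g 2) = s 2 := by
  show phi0 (PresentedGroup.of 2) = s 2
  rw [phi0, PresentedGroup.toGroup.of]
  rfl

lemma phi_N (sigma : Equiv.Perm (Fin 4)) : phi (N sigma) = sigma := by
  have h : ∀ w : List ℕ, phi (evalWord w) = evalPerm w := by
    intro w
    induction w with
    | nil => simp [evalWord, evalPerm]
    | cons n t ih =>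
      show phi (g n * evalWord t) = s n * evalPerm t
      rw [map_mul, ih]
      congr 1
      rcases n with _ | _ | _ | m
      · exact phi_g0
      · exact phi_g1
      · exact phi_g2
      · exact phi_g2
  rw [N, h, word_eval]

lemma N_phi (q : Q) : NHom (phi q) = q := by
  have key : NHom.comp (phi.comp (pr.comp (PresentedGroup.mk stmt7Rels))) =
      pr.comp (PresentedGroup.mk stmt7Rels) := by
    apply FreeGroup.ext_hom
    intro i
    fin_cases i
    · show NHom (phi (g 0)) = g 0
      rw [phi_g0, show NHom (s 0) = N (s 0) from rfl, N, word_s0]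
      show g 0 * evalWord [] = g 0
      rw [show evalWord [] = (1 : Q) from rfl, mul_one]
    · show NHom (phi (g 1)) = g 1
      rw [phi_g1, show NHom (s 1) = N (s 1) from rfl, N, word_s1]
      show g 1 * evalWord [] = g 1
      rw [show evalWord [] = (1 : Q) from rfl, mul_one]
    · show NHom (phi (g 2)) = g 2
      rw [phi_g2, show NHom (s 2) = N (s 2) from rfl, N, word_s2]
      show g 2 * evalWord [] = g 2
      rw [show evalWord [] = (1 : Q) from rfl, mul_one]
  obtain ⟨y, rfl⟩ := QuotientGroup.mk'_surjective (Subgroup.normalClosure sqSet) q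
  obtain ⟨x, rfl⟩ := PresentedGroup.mk_surjective stmt7Rels y
  exact DFunLike.congr_fun key x

end Stmt7Aux

theorem stmt_7 :
    Nonempty
      ((PresentedGroup stmt7Rels ⧸
          Subgroup.normalClosure
            {(PresentedGroup.of (rels := stmt7Rels) 0) ^ 2,
             (PresentedGroup.of (rels := stmt7Rels) 1) ^ 2,
             (PresentedGroup.of (rels := stmt7Rels) 2) ^ 2}) ≃*
        Equiv.Perm (Fin 4)) := by
  exact ⟨{ toFun := Stmt7Aux.phi
           invFun := Stmt7Aux.NHom
           left_inv := Stmt7Aux.N_phi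
           right_inv := Stmt7Aux.phi_N
           map_mul' := map_mul Stmt7Aux.phi }⟩
end

section
/- Let G be a group with elements Γ₁, Γ₂, Γ₂', Γ₃ such that [Γ₂'Γ₂, Γ₁] = e, [Γ₂'Γ₂, Γ₃] = e, ⟨Γ₁, Γ₂⟩ = e, ⟨Γ₁, Γ₂'⟩ = e, ⟨Γ₂, Γ₃⟩ = e, and ⟨Γ₂', Γ₃⟩ = e. Then Γ₂' = Γ₁⁻²Γ₂Γ₁² and Γ₂' = Γ₃⁻²Γ₂Γ₃². -/
private lemma helper_stmt11 {G : Type*} [Group G] (a b c : G)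
    (h1 : (c * b) * a = a * (c * b))
    (h3 : a * b * a = b * a * b)
    (h4 : a * c * a = c * a * c) :
    c = a⁻¹ ^ 2 * b * a ^ 2 := by
  have k1 : c * (b * a) = c * (a * c * a⁻¹ * b) := by
    calc c * (b * a) = (c * b) * a := by group
      _ = a * (c * b) := h1
      _ = (a * c * a) * (a⁻¹ * b) := by group
      _ = (c * a * c) * (a⁻¹ * b) := by rw [h4]
      _ = c * (a * c * a⁻¹ * b) := by group
  have k2 : b * a = a * c * a⁻¹ * b := mul_left_cancel k1
  have k3 : c = a⁻¹ * b * a * b⁻¹ * a := by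
    calc c = a⁻¹ * (a * c * a⁻¹ * b) * b⁻¹ * a := by group
      _ = a⁻¹ * (b * a) * b⁻¹ * a := by rw [k2]
      _ = a⁻¹ * b * a * b⁻¹ * a := by group
  calc c = a⁻¹ * b * a * b⁻¹ * a := k3
    _ = a⁻¹ * a⁻¹ * (a * b * a) * b⁻¹ * a := by group
    _ = a⁻¹ * a⁻¹ * (b * a * b) * b⁻¹ * a := by rw [h3]
    _ = a⁻¹ ^ 2 * b * a ^ 2 := by rw [pow_two, pow_two]; group

theorem stmt_11 {G : Type*} [Group G] (Γ₁ Γ₂ Γ₂' Γ₃ : G)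
    (h1 : (Γ₂' * Γ₂) * Γ₁ = Γ₁ * (Γ₂' * Γ₂))
    (h2 : (Γ₂' * Γ₂) * Γ₃ = Γ₃ * (Γ₂' * Γ₂))
    (h3 : Γ₁ * Γ₂ * Γ₁ = Γ₂ * Γ₁ * Γ₂)
    (h4 : Γ₁ * Γ₂' * Γ₁ = Γ₂' * Γ₁ * Γ₂')
    (h5 : Γ₂ * Γ₃ * Γ₂ = Γ₃ * Γ₂ * Γ₃)
    (h6 : Γ₂' * Γ₃ * Γ₂' = Γ₃ * Γ₂' * Γ₃) :
    Γ₂' = Γ₁⁻¹ ^ 2 * Γ₂ * Γ₁ ^ 2 ∧ Γ₂' = Γ₃⁻¹ ^ 2 * Γ₂ * Γ₃ ^ 2 :=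
  ⟨helper_stmt11 Γ₁ Γ₂ Γ₂' h1 h3 h4,
   helper_stmt11 Γ₃ Γ₂ Γ₂' h2 h5.symm h6.symm⟩
end

section
/- Let G be a group with elements Γ₁, Γ₂, Γ₃ of order dividing 2 satisfying the braid relations ⟨Γ₁,Γ₂⟩ = ⟨Γ₁,Γ₃⟩ = e. If [Γ₂Γ₁Γ₃Γ₁Γ₂, Γ₁] = e, then [Γ₃, Γ₂] = e. -/
theorem stmt_16 {G : Type*} [Group G] (Γ₁ Γ₂ Γ₃ : G)
    (hs1 : Γ₁ ^ 2 = 1) (hs2 : Γ₂ ^ 2 = 1) (hs3 : Γ₃ ^ 2 = 1)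
    (hb1 : Γ₁ * Γ₂ * Γ₁ = Γ₂ * Γ₁ * Γ₂)
    (hb2 : Γ₁ * Γ₃ * Γ₁ = Γ₃ * Γ₁ * Γ₃)
    (hc : (Γ₂ * Γ₁ * Γ₃ * Γ₁ * Γ₂) * Γ₁ = Γ₁ * (Γ₂ * Γ₁ * Γ₃ * Γ₁ * Γ₂)) :
    Γ₃ * Γ₂ = Γ₂ * Γ₃ := by
  have h2 : Γ₂ * (Γ₁ * (Γ₃ * (Γ₂ * Γ₁ * Γ₂))) = Γ₂ * Γ₁ * Γ₂ * (Γ₃ * (Γ₁ * Γ₂)) := by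
    rw [← hb1]
    simpa [mul_assoc] using hc
  have h3 : Γ₃ * (Γ₂ * Γ₁ * Γ₂) = Γ₂ * (Γ₃ * (Γ₁ * Γ₂)) := by
    apply mul_left_cancel (a := Γ₂)
    apply mul_left_cancel (a := Γ₁)
    simpa [mul_assoc] using h2
  have h4 : Γ₃ * Γ₂ * (Γ₁ * Γ₂) = Γ₂ * Γ₃ * (Γ₁ * Γ₂) := by
    simpa [mul_assoc] using h3
  exact mul_right_cancel h4
end
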